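/- In type Dₙ with n ≥ 5 odd, a dominant coweight μ with ω₁^∨ ≤ μ satisfies μ ≱ ω₁^∨ + ω₂^∨ if and only if μ ≤ 2ω_{n-1}^∨ or μ ≤ 2ωₙ^∨. -/

import Mathlib

/-!
Write `d = μ - λ` and `Sₖ = d₀ + ⋯ + dₖ`. The coefficients of `d` on the simple coroots are
`Sₖ` for `k ≤ n - 3` and `(S_{n-2} ∓ d_{n-1}) / 2`, so `λ ≤ μ` iff `Sₖ ≥ 0` for `k ≤ n - 3`,
`|d_{n-1}| ≤ S_{n-2}` and `S_{n-1}` is even. For a dominant `μ ≥ ω₁^∨` (so `μ₀ ≥ 1` and `∑ μ`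
is odd) this criterion shows that `μ ≥ ω₁^∨ + ω₂^∨` exactly when `μ₀ ≥ 2`. If `μ₀ = 1`, then
either `μ = (1, …, 1, -1)`, or `μ` is a `0/1` vector with odd sum, hence `μ ≤ (1, …, 1)` because
`n` is odd.
-/

/-- The simple coroots of type `Dₙ` in `ℤⁿ`: `αᵢ^∨ = eᵢ - eᵢ₊₁` for `i ≤ n-1` and
`αₙ^∨ = e_{n-1} + eₙ` (indices `i : Fin n` are 0-based). -/
def Dcoroot (n : ℕ) (i : Fin n) : Fin n → ℤ :=
  fun j => if i.val = n - 1 then (if j.val = n - 2 ∨ j.val = n - 1 then 1 else 0)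
    else if j.val = i.val then 1 else if j.val = i.val + 1 then -1 else 0

/-- The fundamental coweight `ωₘ^∨ = e₁ + ⋯ + eₘ` of type `Dₙ` for `m ≤ n - 2`. -/
def Domega (n m : ℕ) : Fin n → ℤ := fun j => if j.val < m then 1 else 0

/-- Dominance order: `μ - λ` is a nonnegative integer combination of simple coroots. -/
def DdomLE (n : ℕ) (lam mu : Fin n → ℤ) : Prop :=
  ∃ c : Fin n → ℕ, mu - lam = ∑ i, (c i : ℤ) • Dcoroot n i

/-- Dominant coweights of type `Dₙ`: `μ₁ ≥ ⋯ ≥ μₙ` and `μ_{n-1} + μₙ ≥ 0`. -/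
def Ddominant (n : ℕ) (mu : Fin n → ℤ) : Prop :=
  Antitone mu ∧ ∀ i j : Fin n, i.val = n - 2 → j.val = n - 1 → 0 ≤ mu i + mu j

open Finset

section Sequences

variable {n : ℕ}

def toSeq (v : Fin n → ℤ) (k : ℕ) : ℤ := if h : k < n then v ⟨k, h⟩ else 0

lemma toSeq_of_lt (v : Fin n → ℤ) {k : ℕ} (hk : k < n) : toSeq v k = v ⟨k, hk⟩ := dif_pos hk

@[simp] lemma toSeq_sub (v w : Fin n → ℤ) (k : ℕ) : toSeq (v - w) k = toSeq v k - toSeq w k := by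
  unfold toSeq; split_ifs <;> simp

@[simp] lemma toSeq_add (v w : Fin n → ℤ) (k : ℕ) : toSeq (v + w) k = toSeq v k + toSeq w k := by
  unfold toSeq; split_ifs <;> simp

lemma eq_of_toSeq_eq {v w : Fin n → ℤ} (h : ∀ k < n, toSeq v k = toSeq w k) : v = w :=
  funext fun j => by simpa [toSeq_of_lt _ j.isLt] using h j j.isLt

def partialSum (v : Fin n → ℤ) (k : ℕ) : ℤ := ∑ j ∈ range (k + 1), toSeq v j

lemma partialSum_zero (v : Fin n → ℤ) : partialSum v 0 = toSeq v 0 := by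
  simp [partialSum]

lemma partialSum_succ (v : Fin n → ℤ) (k : ℕ) :
    partialSum v (k + 1) = partialSum v k + toSeq v (k + 1) :=
  sum_range_succ _ _

@[simp] lemma partialSum_sub (v w : Fin n → ℤ) (k : ℕ) :
    partialSum (v - w) k = partialSum v k - partialSum w k := by
  simp [partialSum, sum_sub_distrib]

@[simp] lemma partialSum_add (v w : Fin n → ℤ) (k : ℕ) :
    partialSum (v + w) k = partialSum v k + partialSum w k := by
  simp [partialSum, sum_add_distrib]

lemma partialSum_le {v : Fin n → ℤ} {k : ℕ} {b : ℤ} (h : ∀ j ≤ k, toSeq v j ≤ b) :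
    partialSum v k ≤ (k + 1) * b := by
  have := sum_le_card_nsmul (range (k + 1)) (toSeq v) b fun j hj => h j (by simpa using hj)
  simpa [partialSum] using this

lemma partialSum_eq_of_forall_eq {v : Fin n → ℤ} {k : ℕ} {b : ℤ} (h : ∀ j ≤ k, toSeq v j = b) :
    partialSum v k = (k + 1) * b := by
  rw [partialSum, sum_congr rfl fun j hj => h j (by simpa using hj)]
  simp

end Sequences

lemma toSeq_Domega (n m k : ℕ) : toSeq (Domega n m) k = if k < m ∧ k < n then 1 else 0 := by
  unfold toSeq Domega; split_ifs <;> simp_all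

lemma partialSum_Domega (n m k : ℕ) : partialSum (Domega n m) k = min (k + 1) (min m n) := by
  induction k with
  | zero => rw [partialSum_zero, toSeq_Domega]; split_ifs <;> omega
  | succ k ih => rw [partialSum_succ, ih, toSeq_Domega]; split_ifs <;> omega

lemma Dcoroot_eq (n : ℕ) (i j : Fin n) :
    Dcoroot n i j = (if j.val ≠ n - 1 then (if i.val = j.val then 1 else 0) else 0)
      - (if i.val + 1 = j.val then 1 else 0)
      + (if j.val = n - 2 ∨ j.val = n - 1 then (if i.val = n - 1 then 1 else 0) else 0) := by
  have := i.isLt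
  unfold Dcoroot
  split_ifs <;> omega

lemma sum_ite_val_eq {n : ℕ} (g : Fin n → ℤ) (m : ℕ) :
    ∑ x : Fin n, (if x.val = m then g x else 0) = toSeq g m := by
  unfold toSeq
  split_ifs with h
  · rw [Fintype.sum_eq_single ⟨m, h⟩ fun x hx => if_neg fun h' => hx (Fin.ext h')]
    simp
  · exact sum_eq_zero fun x _ => if_neg (by omega)

lemma toSeq_sum_smul_Dcoroot {n : ℕ} (c : Fin n → ℤ) {k : ℕ} (hk : k < n) :
    toSeq (∑ i, c i • Dcoroot n i) k =
      (if k = n - 1 then 0 else toSeq c k) - (if k = 0 then 0 else toSeq c (k - 1))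
        + (if k = n - 2 ∨ k = n - 1 then toSeq c (n - 1) else 0) := by
  rw [toSeq_of_lt _ hk, Finset.sum_apply]
  simp only [Pi.smul_apply, smul_eq_mul, Dcoroot_eq, mul_add, mul_sub, mul_ite, mul_one, mul_zero,
    sum_add_distrib, sum_sub_distrib, sum_ite_irrel, sum_const_zero, sum_ite_val_eq, ne_eq,
    ite_not]
  rcases k with _ | k <;> simp [sum_ite_val_eq]

theorem exists_nat_sum_smul_Dcoroot_iff {n : ℕ} (hn : 3 ≤ n) (d : Fin n → ℤ) :
    (∃ c : Fin n → ℕ, d = ∑ i, (c i : ℤ) • Dcoroot n i) ↔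
      (∀ k ≤ n - 3, 0 ≤ partialSum d k) ∧ |toSeq d (n - 1)| ≤ partialSum d (n - 2) ∧
        Even (partialSum d (n - 2) + toSeq d (n - 1)) := by
  have hsplit : partialSum d (n - 2) = partialSum d (n - 3) + toSeq d (n - 2) := by
    rw [show n - 2 = n - 3 + 1 by omega, partialSum_succ]
  constructor
  · rintro ⟨c, rfl⟩
    have hD := fun k (hk : k < n) => toSeq_sum_smul_Dcoroot (fun i => (c i : ℤ)) hk
    set C := toSeq fun i => (c i : ℤ)
    have hC : ∀ k, 0 ≤ C k := fun k => by unfold C toSeq; split_ifs <;> simp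
    have hpsum : ∀ k ≤ n - 3, partialSum (∑ i, (c i : ℤ) • Dcoroot n i) k = C k := by
      intro k
      induction k with
      | zero => intro _; have := hD 0 (by omega); rw [partialSum_zero]; split_ifs at this <;> omega
      | succ k ih =>
        intro hk
        have := hD (k + 1) (by omega)
        rw [partialSum_succ, ih (by omega)]
        simp only [Nat.add_sub_cancel, Nat.add_one_ne_zero, if_false] at this
        split_ifs at this <;> omega
    have h3 := hpsum (n - 3) le_rfl
    have h2 := hD (n - 2) (by omega)
    have h1 := hD (n - 1) (by omega)
    rw [show n - 2 - 1 = n - 3 by omega] at h2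
    rw [show n - 1 - 1 = n - 2 by omega] at h1
    have := hC (n - 2)
    have := hC (n - 1)
    refine ⟨fun k hk => hpsum k hk ▸ hC k, abs_le.2 ⟨?_, ?_⟩, ⟨C (n - 1), ?_⟩⟩ <;>
      split_ifs at h1 h2 <;> omega
  · rintro ⟨hmid, habs, r, hr⟩
    rw [abs_le] at habs
    let coeff : ℕ → ℤ := fun k =>
      if k ≤ n - 3 then partialSum d k else if k = n - 2 then partialSum d (n - 2) - r else r
    refine ⟨fun i => (coeff i).toNat, eq_of_toSeq_eq fun k hk => ?_⟩
    have hC : ∀ j < n, toSeq (fun i => ((coeff i).toNat : ℤ)) j = coeff j := fun j hj => by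
      rw [toSeq_of_lt _ hj]
      refine Int.toNat_of_nonneg ?_
      simp only [coeff]
      split_ifs <;> first | exact hmid _ ‹_› | omega
    rw [toSeq_sum_smul_Dcoroot _ hk, hC k hk, hC (k - 1) (by omega), hC (n - 1) (by omega)]
    simp only [coeff]
    rcases (show k = 0 ∨ (1 ≤ k ∧ k ≤ n - 3) ∨ k = n - 2 ∨ k = n - 1 by omega) with
      rfl | ⟨hk1, hk3⟩ | rfl | rfl
    · rw [← partialSum_zero]; split_ifs <;> omega
    · obtain ⟨j, rfl⟩ := Nat.exists_eq_add_of_le' hk1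
      have := partialSum_succ d j
      simp only [Nat.add_sub_cancel, Nat.add_one_ne_zero, if_false]
      split_ifs <;> omega
    · rw [show n - 2 - 1 = n - 3 by omega]; split_ifs <;> omega
    · rw [show n - 1 - 1 = n - 2 by omega]; split_ifs <;> omega

theorem DdomLE_iff {n : ℕ} (hn : 3 ≤ n) (lam mu : Fin n → ℤ) :
    DdomLE n lam mu ↔
      (∀ k ≤ n - 3, 0 ≤ partialSum (mu - lam) k) ∧
      |toSeq (mu - lam) (n - 1)| ≤ partialSum (mu - lam) (n - 2) ∧
      Even (partialSum (mu - lam) (n - 2) + toSeq (mu - lam) (n - 1)) :=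
  exists_nat_sum_smul_Dcoroot_iff hn (mu - lam)

theorem DdomLE.toSeq_zero_le {n : ℕ} {lam mu : Fin n → ℤ} (hn : 3 ≤ n) (h : DdomLE n lam mu) :
    toSeq lam 0 ≤ toSeq mu 0 := by
  have := ((DdomLE_iff hn lam mu).1 h).1 0 (by omega)
  rw [partialSum_zero, toSeq_sub] at this
  omega

namespace Ddominant

variable {n : ℕ} {mu : Fin n → ℤ}

lemma toSeq_antitone (h : Ddominant n mu) {j k : ℕ} (hjk : j ≤ k) (hk : k < n) :
    toSeq mu k ≤ toSeq mu j := by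
  rw [toSeq_of_lt _ hk, toSeq_of_lt _ (hjk.trans_lt hk)]
  exact h.1 (show (⟨j, hjk.trans_lt hk⟩ : Fin n) ≤ ⟨k, hk⟩ from hjk)

lemma abs_toSeq_last_le (h : Ddominant n mu) (hn : 2 ≤ n) :
    |toSeq mu (n - 1)| ≤ toSeq mu (n - 2) := by
  have hpair : 0 ≤ toSeq mu (n - 2) + toSeq mu (n - 1) := by
    rw [toSeq_of_lt mu (by omega), toSeq_of_lt mu (by omega)]
    exact h.2 _ _ rfl rfl
  exact abs_le.2 ⟨by linarith, h.toSeq_antitone (by omega) (by omega)⟩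

lemma toSeq_nonneg (h : Ddominant n mu) (hn : 2 ≤ n) {k : ℕ} (hk : k ≤ n - 2) :
    0 ≤ toSeq mu k :=
  (abs_nonneg _).trans ((h.abs_toSeq_last_le hn).trans (h.toSeq_antitone hk (by omega)))

lemma partialSum_mono (h : Ddominant n mu) (hn : 2 ≤ n) {j k : ℕ} (hjk : j ≤ k) (hk : k ≤ n - 2) :
    partialSum mu j ≤ partialSum mu k :=
  sum_le_sum_of_subset_of_nonneg (range_subset_range.2 (by omega)) fun i hi _ =>
    h.toSeq_nonneg hn (by rw [mem_range] at hi; omega)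

lemma partialSum_eq_toSeq_zero (h : Ddominant n mu) (hn : 2 ≤ n) (h1 : toSeq mu 1 = 0) {k : ℕ}
    (hk : k ≤ n - 2) : partialSum mu k = toSeq mu 0 := by
  induction k with
  | zero => exact partialSum_zero mu
  | succ k ih =>
    have := h.toSeq_nonneg hn hk
    have := h.toSeq_antitone (show 1 ≤ k + 1 by omega) (by omega)
    rw [partialSum_succ, ih (by omega)]
    omega

theorem DdomLE_Domega_one_add_Domega_two_of_two_le (h : Ddominant n mu) (hn : 4 ≤ n)
    (h0 : 2 ≤ toSeq mu 0) (hodd : Odd (partialSum mu (n - 2) + toSeq mu (n - 1))) :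
    DdomLE n (Domega n 1 + Domega n 2) mu := by
  have habs := abs_le.1 (h.abs_toSeq_last_le (by omega))
  have hsplit : partialSum mu (n - 2) = partialSum mu (n - 3) + toSeq mu (n - 2) := by
    rw [show n - 2 = n - 3 + 1 by omega, partialSum_succ]
  rw [Int.odd_iff] at hodd
  have hmid : ∀ k, 1 ≤ k → k ≤ n - 2 → 3 ≤ partialSum mu k := by
    rcases (h.toSeq_nonneg (k := 1) (by omega) (by omega)).eq_or_lt with h1 | h1
    · -- `μ` is supported on the first coordinate, and the odd sum forces `μ₀ ≥ 3`
      have := h.toSeq_antitone (show 1 ≤ n - 2 by omega) (by omega)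
      have := h.partialSum_eq_toSeq_zero (by omega) h1.symm (le_refl (n - 2))
      intro k _ hk
      rw [h.partialSum_eq_toSeq_zero (by omega) h1.symm hk]
      omega
    · intro k hk1 hk
      have := h.partialSum_mono (by omega) hk1 hk
      have : partialSum mu 1 = toSeq mu 0 + toSeq mu 1 := by
        rw [← partialSum_zero]; exact partialSum_succ mu 0
      omega
  rw [DdomLE_iff (by omega)]
  simp only [partialSum_sub, partialSum_add, toSeq_sub, toSeq_add, partialSum_Domega,
    toSeq_Domega, Int.even_iff, abs_le]
  have := hmid (n - 3) (by omega) (by omega)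
  refine ⟨fun k hk => ?_, ?_, ?_⟩
  · rcases k with _ | k
    · rw [partialSum_zero]; omega
    · have := hmid (k + 1) (by omega) (by omega); omega
  · split_ifs <;> omega
  · split_ifs <;> omega

theorem DdomLE_two_spin_coweight_of_toSeq_zero_le_one (h : Ddominant n mu) (hn : 3 ≤ n)
    (hn_odd : Odd n) (h0 : toSeq mu 0 ≤ 1) (hodd : Odd (partialSum mu (n - 2) + toSeq mu (n - 1))) :
    DdomLE n mu (fun j => if j.val = n - 1 then -1 else 1) ∨ DdomLE n mu (fun _ => 1) := by
  have hle : ∀ j, toSeq mu j ≤ 1 := fun j => by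
    by_cases hj : j < n
    · exact (h.toSeq_antitone (Nat.zero_le j) hj).trans h0
    · simp [toSeq, hj]
  have habs := abs_le.1 (h.abs_toSeq_last_le (by omega))
  have hP' : ∀ k, partialSum mu k ≤ k + 1 := fun k => by
    simpa using partialSum_le fun j (_ : j ≤ k) => hle j
  have := hP' (n - 2)
  have := hle (n - 2)
  have := hle (n - 1)
  rw [Int.odd_iff] at hodd
  rw [Nat.odd_iff] at hn_odd
  rcases lt_or_ge (toSeq mu (n - 1)) 0 with hneg | hnonneg
  · left
    set nu : Fin n → ℤ := fun j => if j.val = n - 1 then -1 else 1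
    have hnu : ∀ k ≤ n - 2, partialSum nu k = k + 1 := fun k hk => by
      simpa using partialSum_eq_of_forall_eq (k := k) (b := 1) fun j hj =>
        (toSeq_of_lt nu (by omega)).trans (if_neg (show j ≠ n - 1 by omega))
    have hlast : toSeq nu (n - 1) = -1 := (toSeq_of_lt nu (by omega)).trans (if_pos rfl)
    rw [DdomLE_iff hn]
    simp only [partialSum_sub, toSeq_sub, hnu _ le_rfl, hlast, abs_le, Int.even_iff]
    refine ⟨fun k hk => ?_, ?_, ?_⟩
    · rw [hnu k (by omega)]; have := hP' k; omega
    · omega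
    · omega
  · right
    have hnu : ∀ k ≤ n - 1, partialSum (fun _ : Fin n => (1 : ℤ)) k = k + 1 := fun k hk => by
      simpa using partialSum_eq_of_forall_eq (k := k) (b := 1) fun j hj =>
        toSeq_of_lt (fun _ : Fin n => (1 : ℤ)) (show j < n by omega)
    have hlast : toSeq (fun _ : Fin n => (1 : ℤ)) (n - 1) = 1 := toSeq_of_lt _ (by omega)
    rw [DdomLE_iff hn]
    simp only [partialSum_sub, toSeq_sub, hnu (n - 2) (by omega), hlast, abs_le, Int.even_iff]
    refine ⟨fun k hk => ?_, ?_, ?_⟩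
    · rw [hnu k (by omega)]; have := hP' k; omega
    · omega
    · omega

end Ddominant

theorem stmt9_general (n : ℕ) (hn : 5 ≤ n) (hodd : Odd n) (mu : Fin n → ℤ)
    (hdom : Ddominant n mu)
    (hge : DdomLE n (Domega n 1) mu) :
    (¬ DdomLE n (Domega n 1 + Domega n 2) mu) ↔
      (DdomLE n mu (fun j => if j.val = n - 1 then -1 else 1) ∨
       DdomLE n mu (fun _ => 1)) := by
  have hsum : Odd (partialSum mu (n - 2) + toSeq mu (n - 1)) := by
    have := ((DdomLE_iff (by omega) _ _).1 hge).2.2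
    simp only [partialSum_sub, toSeq_sub, partialSum_Domega, toSeq_Domega, Int.even_iff] at this
    rw [Int.odd_iff]
    split_ifs at this <;> omega
  constructor
  · intro hnot
    refine hdom.DdomLE_two_spin_coweight_of_toSeq_zero_le_one (by omega) hodd ?_ hsum
    by_contra! h2
    exact hnot (hdom.DdomLE_Domega_one_add_Domega_two_of_two_le (by omega) h2 hsum)
  · intro hle hge2
    have h2 := hge2.toSeq_zero_le (by omega)
    have h1 : toSeq mu 0 ≤ 1 := by
      rcases hle with hle | hle <;>
        simpa [toSeq, show 0 < n by omega, show 0 ≠ n - 1 by omega] using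
          hle.toSeq_zero_le (by omega)
    simp only [toSeq_add, toSeq_Domega] at h2
    split_ifs at h2 <;> omega

/-- in type `Dₙ` with `n ≥ 5` odd, a dominant coweight `μ` with
`μ - ω₁^∨` in the coroot lattice and `ω₁^∨ ≤ μ` satisfies `μ ≱ ω₁^∨ + ω₂^∨` iff
`μ ≤ 2ω_{n-1}^∨ = (1,…,1,-1)` or `μ ≤ 2ωₙ^∨ = (1,…,1)`. -/
theorem stmt9 (n : ℕ) (hn : 5 ≤ n) (hodd : Odd n) (mu : Fin n → ℤ)
    (hdom : Ddominant n mu)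
    (hlat : ∃ c : Fin n → ℤ, mu - Domega n 1 = ∑ i, c i • Dcoroot n i)
    (hge : DdomLE n (Domega n 1) mu) :
    (¬ DdomLE n (Domega n 1 + Domega n 2) mu) ↔
      (DdomLE n mu (fun j => if j.val = n - 1 then -1 else 1) ∨
       DdomLE n mu (fun _ => 1)) :=
  stmt9_general n hn hodd mu hdom hge
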